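/- arXiv:2003.02987 — 2 statements merged into one kernel-verified Lean document; each statement's English description precedes it below -/
import Mathlib

section
/- Wave equation for the material derivative of the squared enthalpy (second equation of eq:sigma1a-intro): let V : ℝ⁴ → ℝ⁴ be a smooth vector field which is irrotational (∂_μ V_ν = ∂_ν V_μ for all μ, ν) and satisfies □V^μ = 0 on ℝ⁴ for every μ, and set s := −V_μ V^μ. Then at every point of ℝ⁴ one has □(D_V s) = 4 (∂^μ V^ν)(∂_μ∂_ν s) + 4 (∂^λ V^ν)(∂_λ V^μ)(∂_ν V_μ), with repeated Greek indices summed over {0,1,2,3} and raised/lowered with the Minkowski metric. -/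
open scoped BigOperators

noncomputable section

/-- Partial derivative `∂_μ` of a real-valued function on `ℝ⁴`. -/
def pd (μ : Fin 4) (f : (Fin 4 → ℝ) → ℝ) : (Fin 4 → ℝ) → ℝ :=
  fun x => fderiv ℝ f x (Pi.single μ 1)

/-- Minkowski metric signs: `msign 0 = −1`, `msign i = 1` for `i = 1,2,3`. -/
def msign (μ : Fin 4) : ℝ := if μ = 0 then -1 else 1

/-- Derivative along the vector field `V` : `D_V f = V^μ ∂_μ f`. -/
def DV (V : (Fin 4 → ℝ) → Fin 4 → ℝ) (f : (Fin 4 → ℝ) → ℝ) : (Fin 4 → ℝ) → ℝ :=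
  fun x => ∑ μ : Fin 4, V x μ * pd μ f x

/-- The d'Alembertian `□f = −∂₀²f + Σᵢ ∂ᵢ²f = m^{μν} ∂_μ∂_ν f`. -/
def dAl (f : (Fin 4 → ℝ) → ℝ) : (Fin 4 → ℝ) → ℝ :=
  fun x => ∑ μ : Fin 4, msign μ * pd μ (pd μ f) x

/-! ### Toolkit for `pd` -/

lemma contDiff_pd (μ : Fin 4) {f : (Fin 4 → ℝ) → ℝ} (hf : ContDiff ℝ (⊤ : ℕ∞) f) :
    ContDiff ℝ (⊤ : ℕ∞) (pd μ f) :=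
  (hf.fderiv_right le_rfl).clm_apply contDiff_const

lemma pd_add (μ : Fin 4) {f g : (Fin 4 → ℝ) → ℝ} (hf : ContDiff ℝ (⊤ : ℕ∞) f) (hg : ContDiff ℝ (⊤ : ℕ∞) g) :
    pd μ (fun y => f y + g y) = fun x => pd μ f x + pd μ g x := by
  funext x
  simp [pd, fderiv_fun_add ((hf.differentiable (by simp)) x) ((hg.differentiable (by simp)) x)]

lemma pd_neg (μ : Fin 4) {f : (Fin 4 → ℝ) → ℝ} :
    pd μ (fun y => -f y) = fun x => -pd μ f x := by
  funext x; simp [pd, fderiv_fun_neg]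

lemma pd_mul (μ : Fin 4) {f g : (Fin 4 → ℝ) → ℝ} (hf : ContDiff ℝ (⊤ : ℕ∞) f) (hg : ContDiff ℝ (⊤ : ℕ∞) g) :
    pd μ (fun y => f y * g y) = fun x => pd μ f x * g x + f x * pd μ g x := by
  funext x
  simp [pd, fderiv_fun_mul ((hf.differentiable (by simp)) x) ((hg.differentiable (by simp)) x)]
  ring

lemma pd_const_mul (μ : Fin 4) {f : (Fin 4 → ℝ) → ℝ} (hf : ContDiff ℝ (⊤ : ℕ∞) f) (c : ℝ) :
    pd μ (fun y => c * f y) = fun x => c * pd μ f x := by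
  funext x
  simp [pd, fderiv_const_mul ((hf.differentiable (by simp)) x) c]

lemma pd_sum (μ : Fin 4) {F : Fin 4 → (Fin 4 → ℝ) → ℝ} (hF : ∀ i, ContDiff ℝ (⊤ : ℕ∞) (F i)) :
    pd μ (fun y => ∑ i : Fin 4, F i y) = fun x => ∑ i : Fin 4, pd μ (F i) x := by
  funext x
  simp [pd, fderiv_fun_sum (fun i _ => ((hF i).differentiable (by simp)) x)]

lemma pd_comm (μ ν : Fin 4) {f : (Fin 4 → ℝ) → ℝ} (hf : ContDiff ℝ (⊤ : ℕ∞) f) (x : Fin 4 → ℝ) :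
    pd μ (pd ν f) x = pd ν (pd μ f) x := by
  have hdf : Differentiable ℝ (fderiv ℝ f) :=
    (hf.fderiv_right (m := (⊤ : ℕ∞)) le_rfl).differentiable (by simp)
  have h1 : ∀ (κ ρ : Fin 4) (z : Fin 4 → ℝ),
      pd κ (pd ρ f) z = (fderiv ℝ (fderiv ℝ f) z (Pi.single κ 1)) (Pi.single ρ 1) := by
    intro κ ρ z
    have := fderiv_clm_apply (𝕜 := ℝ) (c := fderiv ℝ f)
      (u := fun _ => (Pi.single ρ 1 : Fin 4 → ℝ)) (hdf z) (differentiableAt_const _)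
    have e0 : pd κ (pd ρ f) z
        = fderiv ℝ (fun y => (fderiv ℝ f y) ((fun _ : Fin 4 → ℝ => (Pi.single ρ 1 : Fin 4 → ℝ)) y)) z (Pi.single κ 1) := rfl
    rw [e0, this]
    simp
  rw [h1, h1]
  exact second_derivative_symmetric (fun y => ((hf.differentiable (by simp)) y).hasFDerivAt)
    (hdf x).hasFDerivAt _ _

/-! ### Algebraic core -/

lemma key_sums (ms v ps : Fin 4 → ℝ) (a pps : Fin 4 → Fin 4 → ℝ)
    (b : Fin 4 → Fin 4 → Fin 4 → ℝ)
    (hbox : ∀ n : Fin 4, (∑ l : Fin 4, ms l * b l l n) = 0)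
    (hsym : ∀ l m n : Fin 4, b l m n = b m l n)
    (hirr2 : ∀ l m n : Fin 4, ms n * b l m n = ms m * b l n m)
    (hb : ∀ l m : Fin 4,
      pps l m = ∑ α : Fin 4, (-2 * ms α) * (a l α * a m α + v α * b l m α)) :
    (∑ l : Fin 4, ∑ μ : Fin 4, ms l * (b l l μ * ps μ))
      + (∑ l : Fin 4, ∑ μ : Fin 4, 2 * (ms l * (a l μ * pps l μ)))
      + (∑ μ : Fin 4, v μ * (∑ l : Fin 4, ∑ ν : Fin 4,
            (-4 * ms l * ms ν) * (a l ν * b μ l ν)))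
    = 4 * (∑ μ : Fin 4, ∑ ν : Fin 4, (ms μ * a μ ν) * pps μ ν)
      + 4 * (∑ l : Fin 4, ∑ ν : Fin 4, ∑ μ : Fin 4,
            (ms l * a l ν) * a l μ * (ms μ * a ν μ)) := by
  -- first group vanishes
  have t1 : (∑ l : Fin 4, ∑ μ : Fin 4, ms l * (b l l μ * ps μ)) = 0 := by
    rw [Finset.sum_comm]
    have : ∀ μ : Fin 4, (∑ l : Fin 4, ms l * (b l l μ * ps μ))
        = (∑ l : Fin 4, ms l * b l l μ) * ps μ := by
      intro μ
      rw [Finset.sum_mul]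
      exact Finset.sum_congr rfl fun l _ => by ring
    simp [this, hbox]
  have pull3 : ∀ (c : ℝ) (f : Fin 4 → Fin 4 → Fin 4 → ℝ),
      (∑ l : Fin 4, ∑ m : Fin 4, ∑ α : Fin 4, c * f l m α)
        = c * (∑ l : Fin 4, ∑ m : Fin 4, ∑ α : Fin 4, f l m α) := by
    intro c f; simp [Finset.mul_sum]
  -- the two basic atoms
  have e2 : (∑ l : Fin 4, ∑ μ : Fin 4, 2 * (ms l * (a l μ * pps l μ)))
      = (-4) * (∑ l : Fin 4, ∑ m : Fin 4, ∑ α : Fin 4,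
          ms l * ms α * (a l m * (a l α * a m α)))
        + (-4) * (∑ l : Fin 4, ∑ m : Fin 4, ∑ α : Fin 4,
          ms l * ms α * (a l m * (v α * b l m α))) := by
    have h1 : (∑ l : Fin 4, ∑ m : Fin 4, 2 * (ms l * (a l m * pps l m)))
        = ∑ l : Fin 4, ∑ m : Fin 4, ∑ α : Fin 4,
            ((-4) * (ms l * ms α * (a l m * (a l α * a m α)))
              + (-4) * (ms l * ms α * (a l m * (v α * b l m α)))) := by
      refine Finset.sum_congr rfl fun l _ => Finset.sum_congr rfl fun m _ => ?_
      rw [hb l m, Finset.mul_sum, Finset.mul_sum, Finset.mul_sum]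
      exact Finset.sum_congr rfl fun α _ => by ring
    rw [h1]
    simp only [Finset.sum_add_distrib]
    rw [pull3, pull3]
  have eR : (∑ μ : Fin 4, ∑ ν : Fin 4, (ms μ * a μ ν) * pps μ ν)
      = (-2) * (∑ l : Fin 4, ∑ m : Fin 4, ∑ α : Fin 4,
          ms l * ms α * (a l m * (a l α * a m α)))
        + (-2) * (∑ l : Fin 4, ∑ m : Fin 4, ∑ α : Fin 4,
          ms l * ms α * (a l m * (v α * b l m α))) := by
    have h1 : (∑ l : Fin 4, ∑ m : Fin 4, (ms l * a l m) * pps l m)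
        = ∑ l : Fin 4, ∑ m : Fin 4, ∑ α : Fin 4,
            ((-2) * (ms l * ms α * (a l m * (a l α * a m α)))
              + (-2) * (ms l * ms α * (a l m * (v α * b l m α)))) := by
      refine Finset.sum_congr rfl fun l _ => Finset.sum_congr rfl fun m _ => ?_
      rw [hb l m, Finset.mul_sum]
      exact Finset.sum_congr rfl fun α _ => by ring
    rw [h1]
    simp only [Finset.sum_add_distrib]
    rw [pull3, pull3]
  -- third group equals second b-group
  have e6 : (∑ μ : Fin 4, ∑ l : Fin 4, ∑ ν : Fin 4,
        ms l * ms ν * (v μ * (a l ν * b μ l ν)))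
      = ∑ l : Fin 4, ∑ m : Fin 4, ∑ α : Fin 4,
          ms l * ms α * (a l m * (v α * b l m α)) := by
    rw [Finset.sum_comm]
    refine Finset.sum_congr rfl fun l _ => ?_
    rw [Finset.sum_comm]
    refine Finset.sum_congr rfl fun ν _ => Finset.sum_congr rfl fun μ _ => ?_
    have h1 := hsym μ l ν
    have h2 := hirr2 l μ ν
    linear_combination (ms l * v μ * a l ν) * h2 + (ms l * ms ν * v μ * a l ν) * h1
  have e3 : (∑ μ : Fin 4, v μ * (∑ l : Fin 4, ∑ ν : Fin 4,
        (-4 * ms l * ms ν) * (a l ν * b μ l ν)))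
      = (-4) * (∑ l : Fin 4, ∑ m : Fin 4, ∑ α : Fin 4,
          ms l * ms α * (a l m * (v α * b l m α))) := by
    rw [← e6, ← pull3]
    refine Finset.sum_congr rfl fun μ _ => ?_
    rw [Finset.mul_sum]
    refine Finset.sum_congr rfl fun l _ => ?_
    rw [Finset.mul_sum]
    exact Finset.sum_congr rfl fun ν _ => by ring
  -- cubic term on the RHS
  have e5 : (∑ l : Fin 4, ∑ ν : Fin 4, ∑ μ : Fin 4,
        (ms l * a l ν) * a l μ * (ms μ * a ν μ))
      = ∑ l : Fin 4, ∑ m : Fin 4, ∑ α : Fin 4,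
          ms l * ms α * (a l m * (a l α * a m α)) := by
    refine Finset.sum_congr rfl fun l _ => Finset.sum_congr rfl fun m _ =>
      Finset.sum_congr rfl fun α _ => by ring
  rw [t1, e2, e3, eR, e5]
  ring

/-- Wave equation for the material derivative of the squared enthalpy (second
equation of eq:sigma1a-intro): for irrotational `V` with `□V^μ = 0` and
`s := −V_μV^μ`,
`□(D_Vs) = 4(∂^μV^ν)(∂_μ∂_νs) + 4(∂^λV^ν)(∂_λV^μ)(∂_νV_μ)`. -/
theorem wave_equation_material_derivative_squared_enthalpy
    (V : (Fin 4 → ℝ) → Fin 4 → ℝ) (hV : ContDiff ℝ (⊤ : ℕ∞) V)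
    (hirr : ∀ (μ ν : Fin 4) (x : Fin 4 → ℝ),
      pd μ (fun y => msign ν * V y ν) x = pd ν (fun y => msign μ * V y μ) x)
    (hboxV : ∀ (μ : Fin 4) (x : Fin 4 → ℝ), dAl (fun y => V y μ) x = 0)
    (s : (Fin 4 → ℝ) → ℝ)
    (hs : s = fun y => -∑ μ : Fin 4, msign μ * V y μ * V y μ)
    (x : Fin 4 → ℝ) :
    dAl (DV V s) x
      = 4 * (∑ μ : Fin 4, ∑ ν : Fin 4,
            (msign μ * pd μ (fun y => V y ν) x) * pd μ (pd ν s) x)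
        + 4 * (∑ lam : Fin 4, ∑ ν : Fin 4, ∑ μ : Fin 4,
            (msign lam * pd lam (fun y => V y ν) x) * pd lam (fun y => V y μ) x
              * (msign μ * pd ν (fun y => V y μ) x)) := by
  have hVf : ∀ ν : Fin 4, ContDiff ℝ (⊤ : ℕ∞) (fun y => V y ν) := fun ν => contDiff_pi.mp hV ν
  have hsC : ContDiff ℝ (⊤ : ℕ∞) s := by
    rw [hs]
    exact (ContDiff.sum fun i _ => (contDiff_const.mul (hVf i)).mul (hVf i)).neg
  have hd1 : ∀ μ ν : Fin 4, ContDiff ℝ (⊤ : ℕ∞) (pd μ (fun y => V y ν)) :=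
    fun μ ν => contDiff_pd μ (hVf ν)
  have hd2 : ∀ l m ν : Fin 4, ContDiff ℝ (⊤ : ℕ∞) (pd l (pd m (fun y => V y ν))) :=
    fun l m ν => contDiff_pd l (hd1 m ν)
  have hps : ∀ μ : Fin 4, ContDiff ℝ (⊤ : ℕ∞) (pd μ s) := fun μ => contDiff_pd μ hsC
  have hpps : ∀ l μ : Fin 4, ContDiff ℝ (⊤ : ℕ∞) (pd l (pd μ s)) :=
    fun l μ => contDiff_pd l (hps μ)
  -- box of components, pointwise
  have hbox' : ∀ (ν : Fin 4) (z : Fin 4 → ℝ),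
      (∑ l : Fin 4, msign l * pd l (pd l (fun y => V y ν)) z) = 0 :=
    fun ν z => hboxV ν z
  -- irrotationality, first derivatives
  have hirr1 : ∀ (μ ν : Fin 4) (z : Fin 4 → ℝ),
      msign ν * pd μ (fun y => V y ν) z = msign μ * pd ν (fun y => V y μ) z := by
    intro μ ν z
    have e1 := congrFun (pd_const_mul μ (hVf ν) (msign ν)) z
    have e2 := congrFun (pd_const_mul ν (hVf μ) (msign μ)) z
    calc msign ν * pd μ (fun y => V y ν) z
        = pd μ (fun y => msign ν * V y ν) z := e1.symm
      _ = pd ν (fun y => msign μ * V y μ) z := hirr μ ν z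
      _ = msign μ * pd ν (fun y => V y μ) z := e2
  -- irrotationality, second derivatives
  have hirr2 : ∀ (l m n : Fin 4),
      msign n * pd l (pd m (fun y => V y n)) x = msign m * pd l (pd n (fun y => V y m)) x := by
    intro l m n
    have hfun : (fun w => msign n * pd m (fun y => V y n) w)
        = (fun w => msign m * pd n (fun y => V y m) w) := funext fun w => hirr1 m n w
    have e1 := congrFun (pd_const_mul l (hd1 m n) (msign n)) x
    have e2 := congrFun (pd_const_mul l (hd1 n m) (msign m)) x
    calc msign n * pd l (pd m (fun y => V y n)) x
        = pd l (fun w => msign n * pd m (fun y => V y n) w) x := e1.symm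
      _ = pd l (fun w => msign m * pd n (fun y => V y m) w) x := by rw [hfun]
      _ = msign m * pd l (pd n (fun y => V y m)) x := e2
  have hsym : ∀ l m n : Fin 4,
      pd l (pd m (fun y => V y n)) x = pd m (pd l (fun y => V y n)) x :=
    fun l m n => pd_comm l m (hVf n) x
  -- Step A: first derivative of s
  have hA : ∀ μ : Fin 4, pd μ s
      = fun z => ∑ ν : Fin 4, (-2 * msign ν) * (V z ν * pd μ (fun y => V y ν) z) := by
    intro μ
    rw [hs]
    funext z
    rw [congrFun (pd_neg μ (f := fun y => ∑ ν : Fin 4, msign ν * V y ν * V y ν)) z,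
      congrFun (pd_sum μ (fun i => (contDiff_const.mul (hVf i)).mul (hVf i))) z,
      ← Finset.sum_neg_distrib]
    refine Finset.sum_congr rfl fun ν _ => ?_
    rw [congrFun (pd_mul μ (contDiff_const.mul (hVf ν)) (hVf ν)) z,
      congrFun (pd_const_mul μ (hVf ν) (msign ν)) z]
    ring
  -- Step B: second derivatives of s
  have hB : ∀ l m : Fin 4, pd l (pd m s)
      = fun z => ∑ α : Fin 4, (-2 * msign α) *
          (pd l (fun y => V y α) z * pd m (fun y => V y α) z
            + V z α * pd l (pd m (fun y => V y α)) z) := by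
    intro l m
    rw [hA m]
    funext z
    rw [congrFun (pd_sum l (fun ν => contDiff_const.mul ((hVf ν).mul (hd1 m ν)))) z]
    refine Finset.sum_congr rfl fun ν _ => ?_
    rw [congrFun (pd_const_mul l ((hVf ν).mul (hd1 m ν)) (-2 * msign ν)) z,
      congrFun (pd_mul l (hVf ν) (hd1 m ν)) z]
  -- Step C: box of s
  have hC : dAl s = fun z => ∑ l : Fin 4, ∑ ν : Fin 4,
      (-2 * msign l * msign ν) *
        (pd l (fun y => V y ν) z * pd l (fun y => V y ν) z) := by
    funext z
    show (∑ l : Fin 4, msign l * pd l (pd l s) z) = _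
    have step1 : (∑ l : Fin 4, msign l * pd l (pd l s) z)
        = ∑ l : Fin 4, ∑ ν : Fin 4,
            ((-2 * msign l * msign ν) *
              (pd l (fun y => V y ν) z * pd l (fun y => V y ν) z)
            + (-2 * msign ν * V z ν) * (msign l * pd l (pd l (fun y => V y ν)) z)) := by
      refine Finset.sum_congr rfl fun l _ => ?_
      rw [congrFun (hB l l) z, Finset.mul_sum]
      exact Finset.sum_congr rfl fun ν _ => by ring
    rw [step1]
    simp only [Finset.sum_add_distrib]
    have step2 : (∑ l : Fin 4, ∑ ν : Fin 4,
        (-2 * msign ν * V z ν) * (msign l * pd l (pd l (fun y => V y ν)) z)) = 0 := by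
      rw [Finset.sum_comm]
      refine Finset.sum_eq_zero fun ν _ => ?_
      rw [← Finset.mul_sum, hbox' ν z, mul_zero]
    rw [step2, add_zero]
  -- Step D: derivative of box of s
  have hD : ∀ μ : Fin 4, pd μ (dAl s)
      = fun z => ∑ l : Fin 4, ∑ ν : Fin 4,
          (-4 * msign l * msign ν) *
            (pd l (fun y => V y ν) z * pd μ (pd l (fun y => V y ν)) z) := by
    intro μ
    rw [hC]
    funext z
    rw [congrFun (pd_sum μ (fun l => ContDiff.sum fun ν _ =>
      contDiff_const.mul ((hd1 l ν).mul (hd1 l ν)))) z]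
    refine Finset.sum_congr rfl fun l _ => ?_
    rw [congrFun (pd_sum μ (fun ν => contDiff_const.mul ((hd1 l ν).mul (hd1 l ν)))) z]
    refine Finset.sum_congr rfl fun ν _ => ?_
    rw [congrFun (pd_const_mul μ ((hd1 l ν).mul (hd1 l ν)) (-2 * msign l * msign ν)) z,
      congrFun (pd_mul μ (hd1 l ν) (hd1 l ν)) z]
    ring
  -- Step E: box commutes with pd on s
  have hE : ∀ (μ : Fin 4) (z : Fin 4 → ℝ), dAl (pd μ s) z = pd μ (dAl s) z := by
    intro μ z
    show (∑ l : Fin 4, msign l * pd l (pd l (pd μ s)) z) = pd μ (dAl s) z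
    have e1 : pd μ (dAl s) z = ∑ l : Fin 4, msign l * pd μ (pd l (pd l s)) z := by
      show pd μ (fun w => ∑ l : Fin 4, msign l * pd l (pd l s) w) z = _
      rw [congrFun (pd_sum μ (fun l => contDiff_const.mul (contDiff_pd l (hps l)))) z]
      refine Finset.sum_congr rfl fun l _ => ?_
      rw [congrFun (pd_const_mul μ (contDiff_pd l (hps l)) (msign l)) z]
    rw [e1]
    refine Finset.sum_congr rfl fun l _ => ?_
    have e2 : pd μ (pd l (pd l s)) z = pd l (pd μ (pd l s)) z :=
      pd_comm μ l (hps l) z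
    have e3 : pd μ (pd l s) = pd l (pd μ s) := funext fun w => pd_comm μ l hsC w
    rw [e2, e3]
  -- Step F1: first derivative of DV V s
  have hF1 : ∀ l : Fin 4, pd l (DV V s)
      = fun z => ∑ μ : Fin 4,
          (pd l (fun y => V y μ) z * pd μ s z + V z μ * pd l (pd μ s) z) := by
    intro l
    funext z
    show pd l (fun w => ∑ μ : Fin 4, V w μ * pd μ s w) z = _
    rw [congrFun (pd_sum l (fun μ => (hVf μ).mul (hps μ))) z]
    exact Finset.sum_congr rfl fun μ _ => congrFun (pd_mul l (hVf μ) (hps μ)) z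
  -- Step F2: second derivative of DV V s
  have hF2 : ∀ l : Fin 4, pd l (pd l (DV V s))
      = fun z => ∑ μ : Fin 4,
          ((pd l (pd l (fun y => V y μ)) z * pd μ s z
              + pd l (fun y => V y μ) z * pd l (pd μ s) z)
            + (pd l (fun y => V y μ) z * pd l (pd μ s) z
              + V z μ * pd l (pd l (pd μ s)) z)) := by
    intro l
    rw [hF1 l]
    funext z
    rw [congrFun (pd_sum l (fun μ =>
      ((hd1 l μ).mul (hps μ)).add ((hVf μ).mul (hpps l μ)))) z]
    refine Finset.sum_congr rfl fun μ _ => ?_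
    rw [congrFun (pd_add l ((hd1 l μ).mul (hps μ)) ((hVf μ).mul (hpps l μ))) z,
      congrFun (pd_mul l (hd1 l μ) (hps μ)) z,
      congrFun (pd_mul l (hVf μ) (hpps l μ)) z]
  -- assemble the left-hand side
  have hL : dAl (DV V s) x
      = (∑ l : Fin 4, ∑ μ : Fin 4,
          msign l * (pd l (pd l (fun y => V y μ)) x * pd μ s x))
        + (∑ l : Fin 4, ∑ μ : Fin 4,
          2 * (msign l * (pd l (fun y => V y μ) x * pd l (pd μ s) x)))
        + (∑ μ : Fin 4, V x μ * (∑ l : Fin 4, ∑ ν : Fin 4,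
            (-4 * msign l * msign ν) *
              (pd l (fun y => V y ν) x * pd μ (pd l (fun y => V y ν)) x))) := by
    show (∑ l : Fin 4, msign l * pd l (pd l (DV V s)) x) = _
    have step1 : (∑ l : Fin 4, msign l * pd l (pd l (DV V s)) x)
        = ∑ l : Fin 4, ∑ μ : Fin 4,
            (msign l * (pd l (pd l (fun y => V y μ)) x * pd μ s x)
              + 2 * (msign l * (pd l (fun y => V y μ) x * pd l (pd μ s) x))
              + V x μ * (msign l * pd l (pd l (pd μ s)) x)) := by
      refine Finset.sum_congr rfl fun l _ => ?_
      rw [congrFun (hF2 l) x, Finset.mul_sum]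
      exact Finset.sum_congr rfl fun μ _ => by ring
    rw [step1]
    simp only [Finset.sum_add_distrib]
    congr 1
    rw [Finset.sum_comm]
    refine Finset.sum_congr rfl fun μ _ => ?_
    rw [← Finset.mul_sum]
    congr 1
    have h0 : (∑ l : Fin 4, msign l * pd l (pd l (pd μ s)) x) = dAl (pd μ s) x := rfl
    rw [h0, hE μ x, congrFun (hD μ) x]
  rw [hL]
  exact key_sums msign (fun μ => V x μ) (fun μ => pd μ s x)
    (fun l ν => pd l (fun y => V y ν) x) (fun l m => pd l (pd m s) x)
    (fun l m n => pd l (pd m (fun y => V y n)) x)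
    (fun n => hbox' n x) hsym hirr2 (fun l m => congrFun (hB l m) x)
end
end

section
/- Second identity in the recovery of the original system (Section 4): let V : ℝ⁴ → ℝ⁴ be a smooth vector field and s : ℝ⁴ → ℝ a smooth function such that □V^α = 0 on ℝ⁴ for every α ∈ {0,1,2,3} and □(D_V s) = 4 (∂^μ V^ν)(∂_μ V^α)(∂_α V_ν) + 4 (∂^μ V^ν)(∂_μ∂_ν s) on ℝ⁴. Define B := V^α V_α + s and X_α := D_V V_α + (1/2) ∂_α s. Then at every point of ℝ⁴ one has D_V(□B) = 4 (∂^μ V^ν)(∂_μ X_ν), with repeated Greek indices summed over {0,1,2,3} and raised/lowered with the Minkowski metric. -/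
open scoped BigOperators

noncomputable section

lemma ContDiff.pd' {f : (Fin 4 → ℝ) → ℝ} (hf : ContDiff ℝ (⊤ : ℕ∞) f) (μ : Fin 4) :
    ContDiff ℝ (⊤ : ℕ∞) (pd μ f) := by
  have h1 : ContDiff ℝ (⊤ : ℕ∞) (fderiv ℝ f) := hf.fderiv_right (by simp)
  exact (ContinuousLinearMap.apply ℝ ℝ (Pi.single μ 1 : Fin 4 → ℝ)).contDiff.comp h1

lemma dA {f : (Fin 4 → ℝ) → ℝ} (hf : ContDiff ℝ (⊤ : ℕ∞) f) (z : Fin 4 → ℝ) :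
    DifferentiableAt ℝ f z := (hf.differentiable (by simp)).differentiableAt

lemma pd_addf {f g : (Fin 4 → ℝ) → ℝ} {x : Fin 4 → ℝ} (hf : DifferentiableAt ℝ f x)
    (hg : DifferentiableAt ℝ g x) (μ : Fin 4) :
    pd μ (fun y => f y + g y) x = pd μ f x + pd μ g x := by
  simp [pd, fderiv_fun_add hf hg]

lemma pd_mulf {f g : (Fin 4 → ℝ) → ℝ} {x : Fin 4 → ℝ} (hf : DifferentiableAt ℝ f x)
    (hg : DifferentiableAt ℝ g x) (μ : Fin 4) :
    pd μ (fun y => f y * g y) x = pd μ f x * g x + f x * pd μ g x := by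
  simp [pd, fderiv_fun_mul hf hg]; ring

lemma pd_constmul {f : (Fin 4 → ℝ) → ℝ} {x : Fin 4 → ℝ} (hf : DifferentiableAt ℝ f x)
    (c : ℝ) (μ : Fin 4) :
    pd μ (fun y => c * f y) x = c * pd μ f x := by
  simp [pd, fderiv_const_mul hf]

lemma pd_sumf {ι : Type*} (t : Finset ι) (f : ι → (Fin 4 → ℝ) → ℝ) {x : Fin 4 → ℝ}
    (hf : ∀ i ∈ t, DifferentiableAt ℝ (f i) x) (μ : Fin 4) :
    pd μ (fun y => ∑ i ∈ t, f i y) x = ∑ i ∈ t, pd μ (f i) x := by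
  simp [pd, fderiv_fun_sum hf]

lemma pd_swap {f : (Fin 4 → ℝ) → ℝ} (hf : ContDiff ℝ (⊤ : ℕ∞) f) (μ ν : Fin 4) (x : Fin 4 → ℝ) :
    pd μ (pd ν f) x = pd ν (pd μ f) x := by
  have hsym : IsSymmSndFDerivAt ℝ f x := hf.contDiffAt.isSymmSndFDerivAt (by rw [minSmoothness_of_isRCLikeNormedField]; exact (WithTop.coe_le_coe.mpr (le_top : (2 : ℕ∞) ≤ ⊤) : ((2 : ℕ∞) : WithTop ℕ∞) ≤ ((⊤ : ℕ∞) : WithTop ℕ∞)))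
  have hd : DifferentiableAt ℝ (fderiv ℝ f) x :=
    ((hf.fderiv_right (m := (⊤ : ℕ∞)) (by simp)).differentiable (by simp)).differentiableAt
  have key : ∀ a b : Fin 4,
      pd a (pd b f) x = fderiv ℝ (fderiv ℝ f) x (Pi.single a 1) (Pi.single b 1) := by
    intro a b
    have : pd b f = fun y => (fderiv ℝ f y) (Pi.single b 1) := rfl
    rw [pd, this, fderiv_clm_apply hd (differentiableAt_const _)]
    simp
  rw [key, key, hsym]

section aux
variable {V : (Fin 4 → ℝ) → Fin 4 → ℝ} {s : (Fin 4 → ℝ) → ℝ}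

lemma cV (hV : ContDiff ℝ (⊤ : ℕ∞) V) (α : Fin 4) : ContDiff ℝ (⊤ : ℕ∞) (fun y => V y α) :=
  contDiff_pi.1 hV α

lemma boxB_eq (hV : ContDiff ℝ (⊤ : ℕ∞) V) (hs : ContDiff ℝ (⊤ : ℕ∞) s)
    (hboxV : ∀ (α : Fin 4) (x : Fin 4 → ℝ), dAl (fun y => V y α) x = 0) (w : Fin 4 → ℝ) :
    dAl (fun y => (∑ α : Fin 4, msign α * V y α * V y α) + s y) w
      = (∑ μ : Fin 4, ∑ α : Fin 4,
          2 * msign μ * msign α * pd μ (fun y => V y α) w * pd μ (fun y => V y α) w)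
        + dAl s w := by
  have hSd : ContDiff ℝ (⊤ : ℕ∞) (fun y => ∑ α : Fin 4, msign α * V y α * V y α) := by
    apply ContDiff.sum; intro α _
    exact (contDiff_const.mul (cV hV α)).mul (cV hV α)
  have hpdB : ∀ μ : Fin 4, pd μ (fun y => (∑ α : Fin 4, msign α * V y α * V y α) + s y)
      = fun z => (∑ α : Fin 4, 2 * msign α * (V z α * pd μ (fun y => V y α) z)) + pd μ s z := by
    intro μ; funext z
    rw [pd_addf (dA hSd z) (dA hs z) μ,
      pd_sumf _ _ (fun α _ => dA ((contDiff_const.mul (cV hV α)).mul (cV hV α)) z) μ]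
    congr 1
    refine Finset.sum_congr rfl fun α _ => ?_
    rw [pd_mulf (f := fun y => msign α * V y α) (g := fun y => V y α)
        (dA (contDiff_const.mul (cV hV α)) z) (dA (cV hV α) z) μ,
      pd_constmul (dA (cV hV α) z) _ μ]
    ring
  have h2 : ∀ μ : Fin 4, pd μ (pd μ (fun y => (∑ α : Fin 4, msign α * V y α * V y α) + s y)) w
      = (∑ α : Fin 4, (2 * msign α * (pd μ (fun y => V y α) w * pd μ (fun y => V y α) w)
          + 2 * msign α * (V w α * pd μ (pd μ (fun y => V y α)) w)))
        + pd μ (pd μ s) w := by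
    intro μ
    rw [hpdB μ]
    have hterm : ∀ α : Fin 4, ContDiff ℝ (⊤ : ℕ∞)
        (fun z => 2 * msign α * (V z α * pd μ (fun y => V y α) z)) :=
      fun α => contDiff_const.mul ((cV hV α).mul ((cV hV α).pd' μ))
    rw [pd_addf (dA (ContDiff.sum fun α _ => hterm α) w) (dA (hs.pd' μ) w) μ,
      pd_sumf _ _ (fun α _ => dA (hterm α) w) μ]
    congr 1
    refine Finset.sum_congr rfl fun α _ => ?_
    rw [pd_constmul (dA ((cV hV α).mul ((cV hV α).pd' μ)) w) _ μ,
      pd_mulf (dA (cV hV α) w) (dA ((cV hV α).pd' μ) w) μ]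
    ring
  calc dAl (fun y => (∑ α : Fin 4, msign α * V y α * V y α) + s y) w
      = ∑ μ : Fin 4, msign μ *
          ((∑ α : Fin 4, (2 * msign α * (pd μ (fun y => V y α) w * pd μ (fun y => V y α) w)
            + 2 * msign α * (V w α * pd μ (pd μ (fun y => V y α)) w)))
          + pd μ (pd μ s) w) := by
        exact Finset.sum_congr rfl fun μ _ => by rw [h2 μ]
    _ = (∑ μ : Fin 4, ∑ α : Fin 4,
          2 * msign μ * msign α * pd μ (fun y => V y α) w * pd μ (fun y => V y α) w)
        + ((∑ α : Fin 4, 2 * msign α * V w α * (∑ μ : Fin 4, msign μ * pd μ (pd μ (fun y => V y α)) w))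
        + dAl s w) := by
        simp only [dAl, Fin.sum_univ_four]
        ring
    _ = _ := by
        have : ∀ α : Fin 4, (∑ μ : Fin 4, msign μ * pd μ (pd μ (fun y => V y α)) w) = 0 :=
          fun α => hboxV α w
        simp [this]
lemma boxDVs_eq {V : (Fin 4 → ℝ) → Fin 4 → ℝ} {s : (Fin 4 → ℝ) → ℝ}
    (hV : ContDiff ℝ (⊤ : ℕ∞) V) (hs : ContDiff ℝ (⊤ : ℕ∞) s)
    (hboxV : ∀ (α : Fin 4) (x : Fin 4 → ℝ), dAl (fun y => V y α) x = 0) (w : Fin 4 → ℝ) :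
    dAl (DV V s) w
      = (2 * ∑ μ : Fin 4, ∑ ν : Fin 4,
          msign μ * pd μ (fun y => V y ν) w * pd μ (pd ν s) w)
        + DV V (dAl s) w := by
  have hb : ∀ β : Fin 4, (∑ μ : Fin 4, msign μ * pd μ (pd μ (fun y => V y β)) w) = 0 :=
    fun β => by simpa [dAl] using hboxV β w
  have h1 : ∀ μ : Fin 4, pd μ (DV V s)
      = fun z => ∑ β : Fin 4,
          (pd μ (fun y => V y β) z * pd β s z + V z β * pd μ (pd β s) z) := by
    intro μ; funext z
    have : DV V s = fun y => ∑ β : Fin 4, V y β * pd β s y := rfl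
    rw [this, pd_sumf _ _ (fun β _ => dA ((cV hV β).mul (hs.pd' β)) z) μ]
    exact Finset.sum_congr rfl fun β _ => by
      rw [pd_mulf (dA (cV hV β) z) (dA (hs.pd' β) z) μ]
  have hswap : ∀ μ β : Fin 4, pd μ (pd μ (pd β s)) w = pd β (pd μ (pd μ s)) w := by
    intro μ β
    have e1 : pd μ (pd β s) = pd β (pd μ s) := funext fun z => pd_swap hs μ β z
    rw [e1, pd_swap (hs.pd' μ) μ β w]
  have h2 : ∀ μ : Fin 4, pd μ (pd μ (DV V s)) w
      = ∑ β : Fin 4,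
          (pd μ (pd μ (fun y => V y β)) w * pd β s w
            + pd μ (fun y => V y β) w * pd μ (pd β s) w
            + (pd μ (fun y => V y β) w * pd μ (pd β s) w
              + V w β * pd β (pd μ (pd μ s)) w)) := by
    intro μ
    rw [h1 μ]
    have hterm : ∀ β : Fin 4, ContDiff ℝ (⊤ : ℕ∞)
        (fun z => pd μ (fun y => V y β) z * pd β s z + V z β * pd μ (pd β s) z) :=
      fun β => (((cV hV β).pd' μ).mul (hs.pd' β)).add ((cV hV β).mul ((hs.pd' β).pd' μ))
    rw [pd_sumf _ _ (fun β _ => dA (hterm β) w) μ]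
    refine Finset.sum_congr rfl fun β _ => ?_
    rw [pd_addf (dA (((cV hV β).pd' μ).mul (hs.pd' β)) w)
        (dA ((cV hV β).mul ((hs.pd' β).pd' μ)) w) μ,
      pd_mulf (dA ((cV hV β).pd' μ) w) (dA (hs.pd' β) w) μ,
      pd_mulf (dA (cV hV β) w) (dA ((hs.pd' β).pd' μ) w) μ, hswap μ β]
  have h4 : ∀ β : Fin 4, pd β (dAl s) w
      = ∑ μ : Fin 4, msign μ * pd β (pd μ (pd μ s)) w := by
    intro β
    have : dAl s = fun z => ∑ μ : Fin 4, msign μ * pd μ (pd μ s) z := rfl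
    rw [this, pd_sumf _ _ (fun μ _ => dA (contDiff_const.mul ((hs.pd' μ).pd' μ)) w) β]
    exact Finset.sum_congr rfl fun μ _ => pd_constmul (dA ((hs.pd' μ).pd' μ) w) _ β
  have hDV : DV V (dAl s) w
      = ∑ β : Fin 4, V w β * ∑ μ : Fin 4, msign μ * pd β (pd μ (pd μ s)) w := by
    have : DV V (dAl s) w = ∑ β : Fin 4, V w β * pd β (dAl s) w := rfl
    rw [this]
    exact Finset.sum_congr rfl fun β _ => by rw [h4 β]
  calc dAl (DV V s) w
      = ∑ μ : Fin 4, msign μ * (∑ β : Fin 4,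
          (pd μ (pd μ (fun y => V y β)) w * pd β s w
            + pd μ (fun y => V y β) w * pd μ (pd β s) w
            + (pd μ (fun y => V y β) w * pd μ (pd β s) w
              + V w β * pd β (pd μ (pd μ s)) w))) :=
        Finset.sum_congr rfl fun μ _ => by rw [h2 μ]
    _ = (∑ β : Fin 4, pd β s w * ∑ μ : Fin 4, msign μ * pd μ (pd μ (fun y => V y β)) w)
        + ((2 * ∑ μ : Fin 4, ∑ ν : Fin 4,
            msign μ * pd μ (fun y => V y ν) w * pd μ (pd ν s) w)
          + ∑ β : Fin 4, V w β * ∑ μ : Fin 4, msign μ * pd β (pd μ (pd μ s)) w) := by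
        simp only [Fin.sum_univ_four]; ring
    _ = _ := by
        simp only [hb, mul_zero, Finset.sum_const_zero, zero_add, hDV]



/-- Second identity in the recovery of the original system (Section 4): if
`□V^α = 0` and `□(D_Vs) = 4(∂^μV^ν)(∂_μV^α)(∂_αV_ν) + 4(∂^μV^ν)(∂_μ∂_νs)`,
then with `B := V^αV_α + s` and `X_α := D_VV_α + ½∂_αs`,
`D_V(□B) = 4(∂^μV^ν)(∂_μX_ν)`. -/
theorem recovery_DboxB
    (V : (Fin 4 → ℝ) → Fin 4 → ℝ) (hV : ContDiff ℝ (⊤ : ℕ∞) V)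
    (s : (Fin 4 → ℝ) → ℝ) (hs : ContDiff ℝ (⊤ : ℕ∞) s)
    (hboxV : ∀ (α : Fin 4) (x : Fin 4 → ℝ), dAl (fun y => V y α) x = 0)
    (hboxDVs : ∀ x : Fin 4 → ℝ, dAl (DV V s) x
      = 4 * (∑ μ : Fin 4, ∑ ν : Fin 4, ∑ α : Fin 4,
            (msign μ * pd μ (fun y => V y ν) x) * pd μ (fun y => V y α) x
              * (msign ν * pd α (fun y => V y ν) x))
        + 4 * (∑ μ : Fin 4, ∑ ν : Fin 4,
            (msign μ * pd μ (fun y => V y ν) x) * pd μ (pd ν s) x))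
    (x : Fin 4 → ℝ) :
    DV V (dAl (fun y => (∑ α : Fin 4, msign α * V y α * V y α) + s y)) x
      = 4 * ∑ μ : Fin 4, ∑ ν : Fin 4,
          (msign μ * pd μ (fun y => V y ν) x)
            * pd μ (fun y => DV V (fun z => msign ν * V z ν) y + (1 / 2) * pd ν s y) x := by
  have cdAls : ContDiff ℝ (⊤ : ℕ∞) (dAl s) := by
    have h : dAl s = fun z => ∑ μ : Fin 4, msign μ * pd μ (pd μ s) z := rfl
    rw [h]
    exact ContDiff.sum fun μ _ => contDiff_const.mul ((hs.pd' μ).pd' μ)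
  have hBfun : dAl (fun y => (∑ α : Fin 4, msign α * V y α * V y α) + s y)
      = fun w => (∑ μ : Fin 4, ∑ α : Fin 4,
          2 * msign μ * msign α * pd μ (fun y => V y α) w * pd μ (fun y => V y α) w)
        + dAl s w := funext fun w => boxB_eq hV hs hboxV w
  have hQc : ContDiff ℝ (⊤ : ℕ∞) (fun w => ∑ μ : Fin 4, ∑ α : Fin 4,
      2 * msign μ * msign α * pd μ (fun y => V y α) w * pd μ (fun y => V y α) w) :=
    ContDiff.sum fun μ _ => ContDiff.sum fun α _ =>
      (contDiff_const.mul ((cV hV α).pd' μ)).mul ((cV hV α).pd' μ)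
  have hpdQ : ∀ ν : Fin 4, pd ν (fun w => ∑ μ : Fin 4, ∑ α : Fin 4,
      2 * msign μ * msign α * pd μ (fun y => V y α) w * pd μ (fun y => V y α) w) x
      = ∑ μ : Fin 4, ∑ α : Fin 4, 4 * msign μ * msign α
          * pd μ (pd ν (fun y => V y α)) x * pd μ (fun y => V y α) x := by
    intro ν
    rw [pd_sumf _ _ (fun μ _ => dA (ContDiff.sum fun α _ =>
      (contDiff_const.mul ((cV hV α).pd' μ)).mul ((cV hV α).pd' μ)) x) ν]
    refine Finset.sum_congr rfl fun μ _ => ?_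
    rw [pd_sumf _ _ (fun α _ => dA
      ((contDiff_const.mul ((cV hV α).pd' μ)).mul ((cV hV α).pd' μ)) x) ν]
    refine Finset.sum_congr rfl fun α _ => ?_
    rw [pd_mulf (f := fun w => 2 * msign μ * msign α * pd μ (fun y => V y α) w)
        (g := pd μ (fun y => V y α))
        (dA (contDiff_const.mul ((cV hV α).pd' μ)) x) (dA ((cV hV α).pd' μ) x) ν,
      pd_constmul (dA ((cV hV α).pd' μ) x) (2 * msign μ * msign α) ν,
      pd_swap (cV hV α) ν μ x]
    ring
  have eν : ∀ ν : Fin 4,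
      pd ν (dAl (fun y => (∑ α : Fin 4, msign α * V y α * V y α) + s y)) x
      = (∑ μ : Fin 4, ∑ α : Fin 4, 4 * msign μ * msign α
          * pd μ (pd ν (fun y => V y α)) x * pd μ (fun y => V y α) x)
        + pd ν (dAl s) x := by
    intro ν
    rw [hBfun, pd_addf (dA hQc x) (dA cdAls x) ν, hpdQ ν]
  have L : DV V (dAl (fun y => (∑ α : Fin 4, msign α * V y α * V y α) + s y)) x
      = (∑ ν : Fin 4, V x ν * ∑ μ : Fin 4, ∑ α : Fin 4, 4 * msign μ * msign α
          * pd μ (pd ν (fun y => V y α)) x * pd μ (fun y => V y α) x)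
        + DV V (dAl s) x := by
    show (∑ ν : Fin 4, V x ν *
        pd ν (dAl (fun y => (∑ α : Fin 4, msign α * V y α * V y α) + s y)) x) = _
    simp only [eν, mul_add, Finset.sum_add_distrib]
    rfl
  have hDVdAls : DV V (dAl s) x
      = 4 * (∑ μ : Fin 4, ∑ ν : Fin 4, ∑ α : Fin 4,
            (msign μ * pd μ (fun y => V y ν) x) * pd μ (fun y => V y α) x
              * (msign ν * pd α (fun y => V y ν) x))
        + 2 * (∑ μ : Fin 4, ∑ ν : Fin 4,
            (msign μ * pd μ (fun y => V y ν) x) * pd μ (pd ν s) x) := by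
    have e1 := boxDVs_eq hV hs hboxV x
    rw [hboxDVs x] at e1
    have e2 : (∑ μ : Fin 4, ∑ ν : Fin 4,
          msign μ * pd μ (fun y => V y ν) x * pd μ (pd ν s) x)
        = ∑ μ : Fin 4, ∑ ν : Fin 4,
          (msign μ * pd μ (fun y => V y ν) x) * pd μ (pd ν s) x := rfl
    rw [e2] at e1
    linarith
  have hXfun : ∀ ν : Fin 4,
      (fun y => DV V (fun z => msign ν * V z ν) y + (1 / 2) * pd ν s y)
      = fun y => (∑ β : Fin 4, V y β * (msign ν * pd β (fun z => V z ν) y))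
          + (1 / 2) * pd ν s y := by
    intro ν; funext y
    congr 1
    simp only [DV]
    exact Finset.sum_congr rfl fun β _ => by
      rw [pd_constmul (dA (cV hV ν) y) (msign ν) β]
  have hpdX : ∀ μ ν : Fin 4,
      pd μ (fun y => DV V (fun z => msign ν * V z ν) y + (1 / 2) * pd ν s y) x
      = (∑ β : Fin 4, (pd μ (fun y => V y β) x * (msign ν * pd β (fun y => V y ν) x)
          + V x β * (msign ν * pd μ (pd β (fun y => V y ν)) x)))
        + (1 / 2) * pd μ (pd ν s) x := by
    intro μ ν
    rw [hXfun ν]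
    have hsumc : ContDiff ℝ (⊤ : ℕ∞)
        (fun y => ∑ β : Fin 4, V y β * (msign ν * pd β (fun z => V z ν) y)) :=
      ContDiff.sum fun β _ => (cV hV β).mul (contDiff_const.mul ((cV hV ν).pd' β))
    rw [pd_addf (dA hsumc x) (dA (contDiff_const.mul (hs.pd' ν)) x) μ,
      pd_sumf _ _ (fun β _ =>
        dA ((cV hV β).mul (contDiff_const.mul ((cV hV ν).pd' β))) x) μ,
      pd_constmul (dA (hs.pd' ν) x) (1 / 2) μ]
    congr 1
    refine Finset.sum_congr rfl fun β _ => ?_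
    rw [pd_mulf (dA (cV hV β) x) (dA (contDiff_const.mul ((cV hV ν).pd' β)) x) μ,
      pd_constmul (dA ((cV hV ν).pd' β) x) (msign ν) μ]
  have R : (4 * ∑ μ : Fin 4, ∑ ν : Fin 4,
        (msign μ * pd μ (fun y => V y ν) x)
          * pd μ (fun y => DV V (fun z => msign ν * V z ν) y + (1 / 2) * pd ν s y) x)
      = 4 * ∑ μ : Fin 4, ∑ ν : Fin 4,
        (msign μ * pd μ (fun y => V y ν) x)
          * ((∑ β : Fin 4, (pd μ (fun y => V y β) x * (msign ν * pd β (fun y => V y ν) x)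
              + V x β * (msign ν * pd μ (pd β (fun y => V y ν)) x)))
            + (1 / 2) * pd μ (pd ν s) x) := by
    congr 1
    exact Finset.sum_congr rfl fun μ _ => Finset.sum_congr rfl fun ν _ => by rw [hpdX μ ν]
  rw [R, L, hDVdAls]
  simp only [Fin.sum_univ_four]
  ring
end aux
end
end
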